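/- Let (X,d) be a metric space, let S ⊆ X be a finite server set with |S| = k, and let c_1,…,c_k ∈ X be a sequence of clients. Then there exists a sequence of matchings f_1,…,f_k, where each f_t : {1,…,t} → S is an optimal (minimum-cost) matching of the first t clients into S, such that the images are nested: range(f_1) ⊆ range(f_2) ⊆ … ⊆ range(f_k). -/

import Mathlib

/-- A matching of the first `t` clients (indexed `1,…,t`) into the server set `S`:
an injective assignment whose values on `{1,…,t}` are servers in `S`. -/
def IsMatching {X : Type*} [MetricSpace X] (S : Finset X) (t : ℕ) (f : ℕ → X) : Prop :=
  Set.InjOn f (Set.Icc 1 t) ∧ ∀ j ∈ Set.Icc 1 t, f j ∈ S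

/-- The cost of a matching `f` of the first `t` clients `c 1, …, c t`. -/
noncomputable def matchingCost {X : Type*} [MetricSpace X] (t : ℕ) (c f : ℕ → X) : ℝ :=
  ∑ j ∈ Finset.Icc 1 t, dist (c j) (f j)

/-- `OPT S t c` is the minimum cost of a matching of the first `t` clients into `S`. -/
noncomputable def OPT {X : Type*} [MetricSpace X] (S : Finset X) (t : ℕ) (c : ℕ → X) : ℝ :=
  sInf {r : ℝ | ∃ f : ℕ → X, IsMatching S t f ∧ matchingCost t c f = r}

/-!
Let `g` be an optimal matching of the first `t` clients and `h` an optimal matching of the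
first `t + 1`. If some server `g j₀` is not used by `h`, follow the alternating path
`j₀ ↦ g⁻¹ (h j₀) ↦ …` and exchange `g` and `h` on it. Both results are again matchings, the
exchange preserves the sum of the two costs, and `g` cannot get cheaper, so the new matching
of `t + 1` clients is still optimal; it keeps every server of `g` that `h` used and gains
`g j₀`. Repeating this, some optimal `h` uses all servers of `g`, and the nested sequence is
built one client at a time from the empty matching.
-/

open Set

theorem Set.InjOn.piecewise {α β : Type*} {f g : α → β} {s D : Set α}
    [∀ j, Decidable (j ∈ D)] (hf : InjOn f (s ∩ D)) (hg : InjOn g (s \ D))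
    (hfg : ∀ a ∈ s ∩ D, ∀ b ∈ s \ D, f a ≠ g b) : InjOn (D.piecewise f g) s := by
  intro a ha b hb hab
  by_cases haD : a ∈ D <;> by_cases hbD : b ∈ D
  · rw [piecewise_eq_of_mem _ _ _ haD, piecewise_eq_of_mem _ _ _ hbD] at hab
    exact hf ⟨ha, haD⟩ ⟨hb, hbD⟩ hab
  · rw [piecewise_eq_of_mem _ _ _ haD, piecewise_eq_of_notMem _ _ _ hbD] at hab
    exact absurd hab (hfg a ⟨ha, haD⟩ b ⟨hb, hbD⟩)
  · rw [piecewise_eq_of_notMem _ _ _ haD, piecewise_eq_of_mem _ _ _ hbD] at hab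
    exact absurd hab.symm (hfg b ⟨hb, hbD⟩ a ⟨ha, haD⟩)
  · rw [piecewise_eq_of_notMem _ _ _ haD, piecewise_eq_of_notMem _ _ _ hbD] at hab
    exact hg ⟨ha, haD⟩ ⟨hb, hbD⟩ hab

theorem exists_seq_of_exists_succ {α : Type*} {P : ℕ → α → Prop} {R : ℕ → α → α → Prop}
    {N : ℕ} (h₀ : ∃ x, P 0 x) (hstep : ∀ t < N, ∀ x, P t x → ∃ y, P (t + 1) y ∧ R t x y) :
    ∃ f : ℕ → α, (∀ t ≤ N, P t (f t)) ∧ ∀ t < N, R t (f t) (f (t + 1)) := by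
  obtain ⟨x₀, hx₀⟩ := h₀
  have hstep' : ∀ t x, ∃ y, t < N → P t x → P (t + 1) y ∧ R t x y := by
    intro t x
    by_cases h : t < N ∧ P t x
    · obtain ⟨y, hy⟩ := hstep t h.1 x h.2
      exact ⟨y, fun _ _ => hy⟩
    · exact ⟨x, fun ht hx => absurd ⟨ht, hx⟩ h⟩
  choose next hnext using hstep'
  let f : ℕ → α := fun t => Nat.rec (motive := fun _ => α) x₀ next t
  have hP : ∀ t ≤ N, P t (f t) := by
    intro t
    induction t with
    | zero => exact fun _ => hx₀
    | succ t ih => exact fun ht => (hnext t (f t) (by omega) (ih (by omega))).1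
  exact ⟨f, hP, fun t ht => (hnext t (f t) ht (hP t ht.le)).2⟩

section AlternatingPath

variable {ι β : Type*} {g h : ι → β} {A B : Set ι} {j₀ a b : ι}

/-- The clients `j₀, j₁, j₂, …` of `A` with `g jᵢ₊₁ = h jᵢ`. -/
def alternatingPath (g h : ι → β) (A : Set ι) (j₀ : ι) : Set ι :=
  {a | Relation.ReflTransGen (fun a b => b ∈ A ∧ h a = g b) j₀ a}

theorem start_mem_alternatingPath : j₀ ∈ alternatingPath g h A j₀ :=
  Relation.ReflTransGen.refl

theorem alternatingPath_subset (hj₀ : j₀ ∈ A) : alternatingPath g h A j₀ ⊆ A := by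
  intro a ha
  rcases Relation.ReflTransGen.cases_tail ha with rfl | ⟨_, -, hA, -⟩
  exacts [hj₀, hA]

theorem mem_alternatingPath_of_apply_eq (ha : a ∈ alternatingPath g h A j₀) (hb : b ∈ A)
    (hab : h a = g b) : b ∈ alternatingPath g h A j₀ :=
  Relation.ReflTransGen.tail ha ⟨hb, hab⟩

/-- Since `g j₀` is not an `h`-server, every client of the path other than `j₀` has its
predecessor in the path. -/
theorem mem_alternatingPath_of_apply_eq_of_injOn (hh : InjOn h B) (hAB : A ⊆ B)
    (hj₀ : j₀ ∈ A) (hj₀h : g j₀ ∉ h '' B) (ha : a ∈ alternatingPath g h A j₀) (hb : b ∈ B)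
    (hab : g a = h b) : b ∈ alternatingPath g h A j₀ := by
  rcases Relation.ReflTransGen.cases_tail ha with rfl | ⟨a', ha', -, ha'a⟩
  · exact absurd ⟨b, hb, hab.symm⟩ hj₀h
  · rwa [← hh (hAB (alternatingPath_subset hj₀ ha')) hb (ha'a.trans hab)]

theorem injOn_piecewise_alternatingPath [∀ j, Decidable (j ∈ alternatingPath g h A j₀)]
    (hg : InjOn g A) (hh : InjOn h B) (hAB : A ⊆ B) (hj₀ : j₀ ∈ A) (hj₀h : g j₀ ∉ h '' B) :
    InjOn ((alternatingPath g h A j₀).piecewise g h) B :=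
  (hg.mono (inter_subset_right.trans (alternatingPath_subset hj₀))).piecewise
    (hh.mono sdiff_subset) fun _ ha _ hb hab =>
      hb.2 (mem_alternatingPath_of_apply_eq_of_injOn hh hAB hj₀ hj₀h ha.2 hb.1 hab)

theorem injOn_piecewise_alternatingPath' [∀ j, Decidable (j ∈ alternatingPath g h A j₀)]
    (hg : InjOn g A) (hh : InjOn h B) (hAB : A ⊆ B) :
    InjOn ((alternatingPath g h A j₀).piecewise h g) A :=
  (hh.mono (inter_subset_left.trans hAB)).piecewise (hg.mono sdiff_subset)
    fun _ ha _ hb hab => hb.2 (mem_alternatingPath_of_apply_eq ha.2 hb.1 hab)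

theorem insert_image_inter_subset_image_piecewise_alternatingPath
    [∀ j, Decidable (j ∈ alternatingPath g h A j₀)] (hAB : A ⊆ B) (hj₀ : j₀ ∈ A) :
    insert (g j₀) (g '' A ∩ h '' B) ⊆ (alternatingPath g h A j₀).piecewise g h '' B := by
  rintro _ (rfl | ⟨⟨a, ha, rfl⟩, b, hb, hba⟩)
  · exact ⟨j₀, hAB hj₀, piecewise_eq_of_mem _ _ _ start_mem_alternatingPath⟩
  by_cases hbD : b ∈ alternatingPath g h A j₀
  · exact ⟨a, hAB ha, piecewise_eq_of_mem _ _ _ (mem_alternatingPath_of_apply_eq hbD ha hba)⟩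
  · exact ⟨b, hb, (piecewise_eq_of_notMem _ _ _ hbD).trans hba⟩

end AlternatingPath

section Matching

variable {X : Type*} [MetricSpace X] {S : Finset X} {c : ℕ → X} {t : ℕ} {f g h : ℕ → X}

def IsOptimalMatching (S : Finset X) (t : ℕ) (c f : ℕ → X) : Prop :=
  IsMatching S t f ∧ matchingCost t c f = OPT S t c

theorem matchingCost_succ (t : ℕ) (c f : ℕ → X) :
    matchingCost (t + 1) c f = matchingCost t c f + dist (c (t + 1)) (f (t + 1)) :=
  Finset.sum_Icc_succ_top (by omega) _

theorem matchingCost_piecewise_add_matchingCost_piecewise (D : Set ℕ)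
    [∀ j, Decidable (j ∈ D)] (t : ℕ) (c u v : ℕ → X) :
    matchingCost t c (D.piecewise u v) + matchingCost t c (D.piecewise v u) =
      matchingCost t c u + matchingCost t c v := by
  simp only [matchingCost, ← Finset.sum_add_distrib]
  refine Finset.sum_congr rfl fun j _ => ?_
  by_cases hj : j ∈ D
  · rw [piecewise_eq_of_mem _ _ _ hj, piecewise_eq_of_mem _ _ _ hj]
  · rw [piecewise_eq_of_notMem _ _ _ hj, piecewise_eq_of_notMem _ _ _ hj, add_comm]

theorem OPT_le_matchingCost (hf : IsMatching S t f) : OPT S t c ≤ matchingCost t c f := by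
  refine csInf_le ⟨0, ?_⟩ ⟨f, hf, rfl⟩
  rintro _ ⟨f', -, rfl⟩
  exact Finset.sum_nonneg fun j _ => dist_nonneg

theorem finite_setOf_matchingCost :
    {r | ∃ f, IsMatching S t f ∧ matchingCost t c f = r}.Finite := by
  refine (finite_range
    fun φ : Finset.Icc 1 t → S => ∑ j : Finset.Icc 1 t, dist (c j) (φ j : X)).subset ?_
  rintro _ ⟨f, hf, rfl⟩
  exact ⟨fun j => ⟨f j, hf.2 j (Finset.mem_Icc.mp j.2)⟩,
    Finset.sum_coe_sort (Finset.Icc 1 t) fun j => dist (c j) (f j)⟩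

theorem exists_isMatching [Nonempty X] (ht : t ≤ S.card) : ∃ f, IsMatching S t f := by
  have hcard : (Icc 1 t).encard ≤ (S : Set X).encard := by
    rw [← Finset.coe_Icc, encard_coe_eq_coe_finsetCard, encard_coe_eq_coe_finsetCard,
      Nat.card_Icc, Nat.add_sub_cancel]
    exact_mod_cast ht
  obtain ⟨f, hfS, hf⟩ := (finite_Icc 1 t).exists_injOn_of_encard_le hcard
  exact ⟨f, hf, hfS⟩

theorem exists_isOptimalMatching (ht : t ≤ S.card) : ∃ f, IsOptimalMatching S t c f := by
  have : Nonempty X := ⟨c 0⟩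
  obtain ⟨f, hf⟩ := exists_isMatching ht
  obtain ⟨f, hf, hcost⟩ :=
    Set.Nonempty.csInf_mem (s := {r | ∃ f, IsMatching S t f ∧ matchingCost t c f = r})
      ⟨_, f, hf, rfl⟩ finite_setOf_matchingCost
  exact ⟨f, hf, hcost⟩

theorem IsOptimalMatching.piecewise {D : Set ℕ} [∀ j, Decidable (j ∈ D)] (hD : t + 1 ∉ D)
    (hg : IsOptimalMatching S t c g) (hh : IsOptimalMatching S (t + 1) c h)
    (hg' : IsMatching S t (D.piecewise h g)) (hh' : IsMatching S (t + 1) (D.piecewise g h)) :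
    IsOptimalMatching S (t + 1) c (D.piecewise g h) := by
  refine ⟨hh', le_antisymm ?_ (OPT_le_matchingCost hh')⟩
  have hswap := matchingCost_piecewise_add_matchingCost_piecewise D t c g h
  have hg_le : matchingCost t c g ≤ matchingCost t c (D.piecewise h g) :=
    hg.2 ▸ OPT_le_matchingCost hg'
  rw [← hh.2, matchingCost_succ, matchingCost_succ, piecewise_eq_of_notMem _ _ _ hD]
  linarith

theorem IsOptimalMatching.exists_ncard_sdiff_lt (hg : IsOptimalMatching S t c g)
    (hh : IsOptimalMatching S (t + 1) c h) {j₀ : ℕ} (hj₀ : j₀ ∈ Icc 1 t)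
    (hj₀h : g j₀ ∉ h '' Icc 1 (t + 1)) :
    ∃ h', IsOptimalMatching S (t + 1) c h' ∧
      (g '' Icc 1 t \ h' '' Icc 1 (t + 1)).ncard <
        (g '' Icc 1 t \ h '' Icc 1 (t + 1)).ncard := by
  classical
  have hAB : Icc 1 t ⊆ Icc 1 (t + 1) := Icc_subset_Icc_right t.le_succ
  set D := alternatingPath g h (Icc 1 t) j₀
  have hDA : D ⊆ Icc 1 t := alternatingPath_subset hj₀
  have hg' : IsMatching S t (D.piecewise h g) :=
    ⟨injOn_piecewise_alternatingPath' hg.1.1 hh.1.1 hAB,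
      piecewise_mem_pi D (fun j hj => hh.1.2 j (hAB hj)) hg.1.2⟩
  have hh'S : ∀ j ∈ Icc 1 (t + 1), D.piecewise g h j ∈ S := fun j hj => by
    by_cases hjD : j ∈ D
    · rw [piecewise_eq_of_mem _ _ _ hjD]; exact hg.1.2 j (hDA hjD)
    · rw [piecewise_eq_of_notMem _ _ _ hjD]; exact hh.1.2 j hj
  have hh' : IsMatching S (t + 1) (D.piecewise g h) :=
    ⟨injOn_piecewise_alternatingPath hg.1.1 hh.1.1 hAB hj₀ hj₀h, hh'S⟩
  have hD : t + 1 ∉ D := fun ht => by simpa using (hDA ht).2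
  refine ⟨_, hg.piecewise hD hh hg' hh', ncard_lt_ncard ?_ ((finite_Icc 1 t).image g).sdiff⟩
  have himg := insert_image_inter_subset_image_piecewise_alternatingPath (g := g) (h := h) hAB hj₀
  exact ⟨fun x hx => ⟨hx.1, fun hxh => hx.2 (himg (Or.inr ⟨hx.1, hxh⟩))⟩,
    fun hsub => (hsub ⟨⟨j₀, hj₀, rfl⟩, hj₀h⟩).2 (himg (Or.inl rfl))⟩

theorem IsOptimalMatching.exists_succ_image_subset (hg : IsOptimalMatching S t c g)
    (ht : t < S.card) :
    ∃ h, IsOptimalMatching S (t + 1) c h ∧ g '' Icc 1 t ⊆ h '' Icc 1 (t + 1) := by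
  obtain ⟨h, hh⟩ := exists_isOptimalMatching (c := c) ht
  induction hn : (g '' Icc 1 t \ h '' Icc 1 (t + 1)).ncard using Nat.strong_induction_on
    generalizing h with
  | _ n ih =>
    by_cases hsub : g '' Icc 1 t ⊆ h '' Icc 1 (t + 1)
    · exact ⟨h, hh, hsub⟩
    obtain ⟨_, ⟨j₀, hj₀, rfl⟩, hj₀h⟩ := not_subset.mp hsub
    obtain ⟨h', hh', hlt⟩ := hg.exists_ncard_sdiff_lt hh hj₀ hj₀h
    exact ih _ (hn ▸ hlt) h' hh' rfl

end Matching

/-- For a metric space `(X,d)`, a finite server set `S` with `|S| = k`, and clients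
`c 1, …, c k`, there is a sequence of optimal matchings `f 1, …, f k` (where `f t` optimally
matches the first `t` clients into `S`) whose images (sets of used servers) are nested. -/
theorem stmt4 {X : Type*} [MetricSpace X] (S : Finset X) (c : ℕ → X) :
    ∃ f : ℕ → (ℕ → X),
      (∀ t, 1 ≤ t → t ≤ S.card →
        IsMatching S t (f t) ∧ matchingCost t c (f t) = OPT S t c) ∧
      (∀ t, 1 ≤ t → t < S.card →
        f t '' Set.Icc 1 t ⊆ f (t + 1) '' Set.Icc 1 (t + 1)) := by
  obtain ⟨f, hopt, hnest⟩ := exists_seq_of_exists_succ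
    (P := fun t f => IsOptimalMatching S t c f)
    (R := fun t f g => f '' Icc 1 t ⊆ g '' Icc 1 (t + 1))
    (exists_isOptimalMatching (Nat.zero_le _)) fun t ht g hg => hg.exists_succ_image_subset ht
  exact ⟨f, fun t _ ht => hopt t ht, fun t _ ht => hnest t ht⟩
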